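/- For the simple walk, the function w : ℤ² → ℝ defined by w(i,j) = (i+1)·(j−1)j(j+1)(j+2)(j+3) for i,j ≥ 0 and w(i,j) = 0 otherwise (the coefficient function of the generating function H₃¹ = −128y²/((x−1)²(y−1)⁶) up to a nonzero scalar), satisfies Δw = 5·g, where g(i,j) = (i+1)·j(j+1)(j+2) on the quadrant (extended by zero). In particular Δ³w = 0, i.e. w is discrete polyharmonic of order 3. -/

import Mathlib

/-- The discrete Laplacian of the simple walk (steps `(±1,0)`, `(0,±1)`, weight `1/4` each),
defined to be `0` outside the quarter plane. -/
noncomputable def swLap (h : ℤ → ℤ → ℝ) : ℤ → ℤ → ℝ :=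
  fun i j =>
    if 0 ≤ i ∧ 0 ≤ j then
      (h (i + 1) j + h (i - 1) j + h i (j + 1) + h i (j - 1)) / 4 - h i j
    else 0

/-!
Each of `w`, `g` and `(i+1)(j+1)` is the restriction to the quadrant of a polynomial of the form
`(i+1)·p(j)` with `p(-1) = 0`. Such a polynomial vanishes on the lines `i = -1` and `j = -1`,
so the Dirichlet Laplacian of its restriction is the restriction of its full-plane Laplacian.
Since `i+1` is harmonic in `i`, the full-plane Laplacian of `(i+1)·p(j)` is `(i+1)` times a
quarter of the second difference of `p`, which maps `(j-1)j(j+1)(j+2)(j+3)` to `20·j(j+1)(j+2)`,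
then to `120·(j+1)`, then to `0`.
-/

namespace SimpleWalk

def quadrantExt (f : ℤ → ℤ → ℝ) : ℤ → ℤ → ℝ :=
  fun i j => if 0 ≤ i ∧ 0 ≤ j then f i j else 0

noncomputable def planeLap (f : ℤ → ℤ → ℝ) : ℤ → ℤ → ℝ :=
  fun i j => (f (i + 1) j + f (i - 1) j + f i (j + 1) + f i (j - 1)) / 4 - f i j

section Vanishing

variable {f : ℤ → ℤ → ℝ} (hi : ∀ j, f (-1) j = 0) (hj : ∀ i, f i (-1) = 0)
include hi hj

theorem quadrantExt_apply_of_neg_one_le {i j : ℤ} (hi₁ : -1 ≤ i) (hj₁ : -1 ≤ j) :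
    quadrantExt f i j = f i j := by
  unfold quadrantExt
  split_ifs with h
  · rfl
  · rcases not_and_or.mp h with h | h
    · rw [show i = -1 by omega, hi]
    · rw [show j = -1 by omega, hj]

theorem swLap_quadrantExt : swLap (quadrantExt f) = quadrantExt (planeLap f) := by
  funext i j
  unfold swLap
  split_ifs with h
  · obtain ⟨hi₀, hj₀⟩ := h
    have hf {a b : ℤ} (ha : -1 ≤ a) (hb : -1 ≤ b) := quadrantExt_apply_of_neg_one_le hi hj ha hb
    rw [hf (by omega) (by omega), hf (by omega) (by omega), hf (by omega) (by omega),
      hf (by omega) (by omega), hf (by omega) (by omega), quadrantExt, if_pos ⟨hi₀, hj₀⟩, planeLap]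
  · rw [quadrantExt, if_neg h]

end Vanishing

theorem planeLap_affine_mul (p : ℤ → ℝ) :
    planeLap (fun (i j : ℤ) => ((i : ℝ) + 1) * p j) =
      fun (i j : ℤ) => ((i : ℝ) + 1) * ((p (j + 1) - 2 * p j + p (j - 1)) / 4) := by
  funext i j
  simp only [planeLap]
  push_cast
  ring

theorem swLap_quadrantExt_affine_mul {p q : ℤ → ℝ} (hp : p (-1) = 0)
    (hpq : ∀ j, p (j + 1) - 2 * p j + p (j - 1) = 4 * q j) :
    swLap (quadrantExt fun i j => ((i : ℝ) + 1) * p j) =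
      quadrantExt fun i j => ((i : ℝ) + 1) * q j := by
  rw [swLap_quadrantExt (by intro j; push_cast; ring) (by intro i; rw [hp, mul_zero]),
    planeLap_affine_mul]
  simp only [hpq, mul_div_cancel_left₀ _ (four_ne_zero' ℝ)]

end SimpleWalk

open SimpleWalk in
theorem simple_walk_w_triharmonic
    (g w : ℤ → ℤ → ℝ)
    (hg : ∀ i j : ℤ, g i j =
      if 0 ≤ i ∧ 0 ≤ j then ((i : ℝ) + 1) * ((j : ℝ) * ((j : ℝ) + 1) * ((j : ℝ) + 2))
      else 0)
    (hw : ∀ i j : ℤ, w i j =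
      if 0 ≤ i ∧ 0 ≤ j then
        ((i : ℝ) + 1) *
          (((j : ℝ) - 1) * (j : ℝ) * ((j : ℝ) + 1) * ((j : ℝ) + 2) * ((j : ℝ) + 3))
      else 0) :
    (swLap w = fun i j => 5 * g i j) ∧ swLap (swLap (swLap w)) = 0 := by
  have hw' : w = quadrantExt fun i j => ((i : ℝ) + 1) *
      (((j : ℝ) - 1) * (j : ℝ) * ((j : ℝ) + 1) * ((j : ℝ) + 2) * ((j : ℝ) + 3)) :=
    funext₂ hw
  have hg' : (fun i j => 5 * g i j) = quadrantExt fun i j => ((i : ℝ) + 1) *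
      (5 * ((j : ℝ) * ((j : ℝ) + 1) * ((j : ℝ) + 2))) := by
    funext i j
    rw [hg, quadrantExt]
    split_ifs <;> ring
  have h₁ : swLap w = fun i j => 5 * g i j := by
    rw [hw', hg']
    exact swLap_quadrantExt_affine_mul (by norm_num) (fun j => by push_cast; ring)
  have h₂ : swLap (fun i j => 5 * g i j) =
      quadrantExt fun i j => ((i : ℝ) + 1) * (15 / 2 * ((j : ℝ) + 1)) := by
    rw [hg']
    exact swLap_quadrantExt_affine_mul (by norm_num) (fun j => by push_cast; ring)
  have h₃ : swLap (quadrantExt fun i j => ((i : ℝ) + 1) * (15 / 2 * ((j : ℝ) + 1))) = 0 := by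
    rw [swLap_quadrantExt_affine_mul (q := fun _ => 0) (by norm_num) (fun j => by push_cast; ring)]
    funext i j
    simp [quadrantExt]
  exact ⟨h₁, by rw [h₁, h₂, h₃]⟩
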